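/- Let M, L ∈ ℝ^{d×d} be symmetric invertible matrices with L − M positive semidefinite, and suppose M and L are congruent. Then every symmetric matrix Q ∈ ℝ^{d×d} with Q − M and L − Q both positive semidefinite is invertible. -/

import Mathlib

/-!
Congruent forms have the same signature (Sylvester's law of inertia): `M` and `L` both have `p`
positive and `m` negative squares, and `p + m = d` because `M` is nondegenerate. From `M ≤ Q`,
`Q` is positive definite on a `p`-dimensional subspace; from `Q ≤ L`, it is negative definite on
an `m`-dimensional one. Hence the radical of `Q` has dimension `d - p - m = 0`, so `Q` is
invertible.
-/

open Matrix

/-- Two real symmetric matrices are congruent if `Tᵀ M T = L` for some invertible `T`. -/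
def MatCongruent {d : ℕ} (M L : Matrix (Fin d) (Fin d) ℝ) : Prop :=
  ∃ T : Matrix (Fin d) (Fin d) ℝ, IsUnit T ∧ Tᵀ * M * T = L

section Signature

variable {R E : Type*} [CommRing R] [LinearOrder R] [AddCommGroup E] [Module R E]
  [Module.Finite R E] [StrongRankCondition R] {Q₁ Q₂ : QuadraticForm R E}

theorem sigPos_mono (h : ∀ x, Q₁ x ≤ Q₂ x) : sigPos Q₁ ≤ sigPos Q₂ := by
  obtain ⟨V, hV, hpos⟩ := exists_finrank_eq_sigPos_and_posDef Q₁
  exact hV ▸ le_sigPos_of_posDef Q₂ fun x hx => (hpos x hx).trans_le (h x)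

theorem sigNeg_anti [IsOrderedAddMonoid R] (h : ∀ x, Q₁ x ≤ Q₂ x) : sigNeg Q₂ ≤ sigNeg Q₁ :=
  sigPos_mono (Q₁ := -Q₂) (Q₂ := -Q₁) fun x => neg_le_neg (h x)

end Signature

namespace Matrix

variable {n R : Type*} [Fintype n] [DecidableEq n] [CommRing R]

theorem toQuadraticForm'_apply (A : Matrix n n R) (x : n → R) :
    A.toQuadraticForm' x = x ⬝ᵥ A *ᵥ x :=
  toLinearMap₂'_apply' A x x

theorem toQuadraticForm'_transpose_mul_mul (A T : Matrix n n R) :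
    (Tᵀ * A * T).toQuadraticForm' = A.toQuadraticForm'.comp (toLin' T) := by
  ext x
  simp only [toQuadraticForm'_apply, QuadraticMap.comp_apply, toLin'_apply, ← mulVec_mulVec,
    dotProduct_mulVec _ Tᵀ, vecMul_transpose]

theorem equivalent_toQuadraticForm'_transpose_mul_mul (A : Matrix n n R) {T : Matrix n n R}
    (hT : IsUnit T) : A.toQuadraticForm'.Equivalent (Tᵀ * A * T).toQuadraticForm' := by
  rw [toQuadraticForm'_transpose_mul_mul]
  exact ⟨QuadraticMap.isometryEquivOfCompLinearEquiv _ (toLinearEquiv' T hT.invertible)⟩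

theorem toQuadraticForm'_le_of_posSemidef_sub [PartialOrder R] [IsOrderedAddMonoid R] [StarRing R]
    [TrivialStar R] {A B : Matrix n n R} (h : (A - B).PosSemidef) (x : n → R) :
    B.toQuadraticForm' x ≤ A.toQuadraticForm' x := by
  have := h.dotProduct_mulVec_nonneg x
  rwa [star_trivial, sub_mulVec, dotProduct_sub, sub_nonneg, ← toQuadraticForm'_apply,
    ← toQuadraticForm'_apply] at this

theorem radical_toQuadraticForm' [Invertible (2 : R)] {A : Matrix n n R} (hA : A.IsSymm) :
    A.toQuadraticForm'.radical = LinearMap.ker (toLin' A) := by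
  have hpolar (x y : n → R) :
      QuadraticMap.polar A.toQuadraticForm' x y = 2 * ((A *ᵥ x) ⬝ᵥ y) := by
    rw [toQuadraticForm', LinearMap.BilinMap.polar_toQuadraticMap, toLinearMap₂'_apply',
      toLinearMap₂'_apply', dotProduct_mulVec, ← mulVec_transpose, hA.eq, dotProduct_comm y]
    ring
  ext x
  simp only [QuadraticMap.radical_eq_ker_polarBilin, LinearMap.mem_ker, LinearMap.ext_iff,
    QuadraticMap.polarBilin_apply_apply, hpolar, LinearMap.zero_apply, toLin'_apply,
    (isUnit_of_invertible (2 : R)).mul_right_eq_zero, dotProduct_eq_zero_iff]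

theorem finrank_radical_toQuadraticForm'_eq_zero_iff {K : Type*} [Field K] [Invertible (2 : K)]
    {A : Matrix n n K} (hA : A.IsSymm) :
    Module.finrank K A.toQuadraticForm'.radical = 0 ↔ IsUnit A := by
  rw [radical_toQuadraticForm' hA, Submodule.finrank_eq_zero, LinearMap.ker_eq_bot,
    toLin'_apply', coe_mulVecLin, mulVec_injective_iff_isUnit]

end Matrix

theorem stmt_3 {d : ℕ} (M L : Matrix (Fin d) (Fin d) ℝ)
    (hM : M.IsSymm) (hMinv : IsUnit M) (hcong : MatCongruent M L) :
    ∀ Q : Matrix (Fin d) (Fin d) ℝ, Q.IsSymm →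
      (Q - M).PosSemidef → (L - Q).PosSemidef → IsUnit Q := by
  intro Q hQ hQM hLQ
  obtain ⟨T, hT, rfl⟩ := hcong
  have hsigNeg := (equivalent_toQuadraticForm'_transpose_mul_mul M hT).sigNeg_eq
  have hpos := sigPos_mono (toQuadraticForm'_le_of_posSemidef_sub hQM)
  have hneg := sigNeg_anti (toQuadraticForm'_le_of_posSemidef_sub hLQ)
  have hdimM := QuadraticForm.sigPos_add_sigNeg_add_radical (Q := M.toQuadraticForm')
  have hdimQ := QuadraticForm.sigPos_add_sigNeg_add_radical (Q := Q.toQuadraticForm')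
  rw [(finrank_radical_toQuadraticForm'_eq_zero_iff hM).2 hMinv] at hdimM
  refine (finrank_radical_toQuadraticForm'_eq_zero_iff hQ).1 ?_
  omega
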